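/- The function f : ℝ → ℝ defined by f(y) = Σ_{k=0}^∞ 2^{−k}‖2^{k²}y‖, where ‖t‖ = dist(t, ℤ), is continuous and has no M-points; consequently f is nowhere differentiable. -/

import Mathlib

/-!
Write `P = 2⁻¹ ^ n`. If `|s| ≤ 2^{-n²}` and `2^{k²} s ∈ ℤ` for all `k > n`, the terms `k > n` of
`f (y + s) - f y` vanish and those with `k < n` add up to `O(P³)`, so
`f (y + s) - f y = P (‖2^{n²}(y + s)‖ - ‖2^{n²}y‖) + O(P³)`.
Multiples `s` of `2^{-(n²+2n)}` qualify, and move `2^{n²}(y + s)` in steps of `P²`. So there are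
`x < y < z` within `P³` of `y` where `‖2^{n²}·‖` is within `P²` of a value `w` at distance
`≥ 1/4` from `‖2^{n²}y‖`: then `|f x - f y| ≥ P/4 - O(P³)` while
`|f x - f z| + |z - x| = O(P³)`, which no constant `c` absorbs as `n → ∞`.
A point of differentiability is always an `M`-point, as `f` is Lipschitz at it.
-/

open Filter Finset Topology

def IsMPoint (f : ℝ → ℝ) (y : ℝ) : Prop :=
  ∃ c : ℝ, 1 ≤ c ∧ ∃ ε > 0, ∀ x ∈ Set.Ioo (y - ε) y, ∀ z ∈ Set.Ioo y (y + ε),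
    |f x - f y| ≤ c * (|f x - f z| + |z - x|)

lemma exists_natCast_div_near {r : ℝ} (hr₀ : 0 < r) (hr₁ : r ≤ 1) {N : ℕ} (hN : 0 < N) :
    ∃ j : ℕ, 0 < j ∧ j ≤ N ∧ |r - j / N| ≤ 1 / N := by
  have hN' : (0 : ℝ) < N := Nat.cast_pos.2 hN
  set j := ⌈N * r⌉₊
  refine ⟨j, Nat.ceil_pos.2 (by positivity), Nat.ceil_le.2 (by nlinarith), ?_⟩
  have hle := Nat.le_ceil (N * r)
  have hlt := Nat.ceil_lt_add_one (by positivity : 0 ≤ (N : ℝ) * r)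
  rw [show r - j / N = (N * r - j) / N by field_simp, abs_div, abs_of_pos hN',
    div_le_div_iff_of_pos_right hN', abs_le]
  constructor <;> linarith

noncomputable def distNearestInt (t : ℝ) : ℝ := ‖(t : UnitAddCircle)‖

namespace distNearestInt

lemma nonneg (t : ℝ) : 0 ≤ distNearestInt t := norm_nonneg _

lemma le_half (t : ℝ) : distNearestInt t ≤ 1 / 2 := by
  simpa [distNearestInt] using
    AddCircle.norm_le_half_period (p := (1 : ℝ)) (x := (t : UnitAddCircle)) one_ne_zero

lemma abs_sub_le (a b : ℝ) : |distNearestInt a - distNearestInt b| ≤ |a - b| := by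
  refine (abs_norm_sub_norm_le _ _).trans ?_
  rw [← AddCircle.coe_sub]
  exact QuotientAddGroup.norm_mk_le_norm

lemma lipschitzWith : LipschitzWith 1 distNearestInt :=
  LipschitzWith.of_dist_le_mul fun a b => by simpa [Real.dist_eq] using abs_sub_le a b

lemma add_intCast (t : ℝ) (m : ℤ) : distNearestInt (t + m) = distNearestInt t := by
  simp [distNearestInt]

lemma neg (t : ℝ) : distNearestInt (-t) = distNearestInt t := by
  simp [distNearestInt]

lemma of_abs_le_half {t : ℝ} (ht : |t| ≤ 1 / 2) : distNearestInt t = |t| :=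
  (AddCircle.norm_coe_eq_abs_iff (p := 1) one_ne_zero).2 (by simpa using ht)

lemma exists_sub_near (u : ℝ) {w : ℝ} (hw₀ : 0 ≤ w) (hw₁ : w ≤ 1 / 2) {N : ℕ} (hN : 0 < N) :
    ∃ j : ℕ, 0 < j ∧ j ≤ N ∧ |distNearestInt (u - j / N) - w| ≤ 1 / N := by
  -- a point of `[u - 1, u)` at distance `w` from `ℤ`
  set p : ℝ := w + (⌈u - w⌉ - 1 : ℤ)
  have hp : distNearestInt p = w := by
    rw [add_intCast, of_abs_le_half (by rwa [abs_of_nonneg hw₀]), abs_of_nonneg hw₀]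
  obtain ⟨j, hj₀, hjN, hj⟩ := exists_natCast_div_near (r := u - p)
    (by have := Int.ceil_lt_add_one (u - w); push_cast [p]; linarith)
    (by have := Int.le_ceil (u - w); push_cast [p]; linarith) hN
  refine ⟨j, hj₀, hjN, ?_⟩
  calc |distNearestInt (u - j / N) - w|
        = |distNearestInt (u - j / N) - distNearestInt p| := by rw [hp]
    _ ≤ |u - j / N - p| := abs_sub_le _ _
    _ = |u - p - j / N| := by ring_nf
    _ ≤ 1 / N := hj

lemma exists_add_near (u : ℝ) {w : ℝ} (hw₀ : 0 ≤ w) (hw₁ : w ≤ 1 / 2) {N : ℕ} (hN : 0 < N) :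
    ∃ j : ℕ, 0 < j ∧ j ≤ N ∧ |distNearestInt (u + j / N) - w| ≤ 1 / N := by
  obtain ⟨j, hj₀, hjN, hj⟩ := exists_sub_near (-u) hw₀ hw₁ hN
  exact ⟨j, hj₀, hjN, by rwa [← neg_add', neg] at hj⟩

lemma exists_far (t : ℝ) :
    ∃ w : ℝ, 0 ≤ w ∧ w ≤ 1 / 2 ∧ 1 / 4 ≤ |distNearestInt t - w| := by
  rcases le_total (distNearestInt t) (1 / 4) with h | h
  · refine ⟨1 / 2, by norm_num, le_rfl, ?_⟩
    rw [abs_sub_comm, abs_of_nonneg (by linarith)]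
    linarith
  · exact ⟨0, le_rfl, by norm_num, by rwa [sub_zero, abs_of_nonneg (nonneg t)]⟩

end distNearestInt

noncomputable def lacunaryTakagi (y : ℝ) : ℝ :=
  ∑' k : ℕ, (2 : ℝ)⁻¹ ^ k * distNearestInt (2 ^ (k ^ 2) * y)

lemma norm_inv_two_pow_mul_distNearestInt_le (k : ℕ) (t : ℝ) :
    ‖(2 : ℝ)⁻¹ ^ k * distNearestInt t‖ ≤ (2 : ℝ)⁻¹ ^ k := by
  rw [norm_mul, Real.norm_of_nonneg (by positivity),
    Real.norm_of_nonneg (distNearestInt.nonneg t)]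
  exact mul_le_of_le_one_right (by positivity) ((distNearestInt.le_half t).trans (by norm_num))

lemma summable_inv_two_pow : Summable fun k : ℕ => (2 : ℝ)⁻¹ ^ k :=
  summable_geometric_of_lt_one (by norm_num) (by norm_num)

lemma continuous_lacunaryTakagi : Continuous lacunaryTakagi :=
  continuous_tsum (fun _ => continuous_const.mul <|
      distNearestInt.lipschitzWith.continuous.comp (continuous_const_mul _))
    summable_inv_two_pow fun k _ => norm_inv_two_pow_mul_distNearestInt_le k _

lemma summable_lacunaryTakagi (y : ℝ) :
    Summable fun k : ℕ => (2 : ℝ)⁻¹ ^ k * distNearestInt (2 ^ (k ^ 2) * y) :=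
  .of_norm_bounded summable_inv_two_pow fun k => norm_inv_two_pow_mul_distNearestInt_le k _

lemma lacunaryTakagi_add_sub_eq_sum {n : ℕ} (y : ℝ) {s : ℝ}
    (hs : ∀ k, n < k → ∃ m : ℤ, 2 ^ (k ^ 2) * s = m) :
    lacunaryTakagi (y + s) - lacunaryTakagi y = ∑ k ∈ range (n + 1), (2 : ℝ)⁻¹ ^ k *
      (distNearestInt (2 ^ (k ^ 2) * (y + s)) - distNearestInt (2 ^ (k ^ 2) * y)) := by
  rw [lacunaryTakagi, lacunaryTakagi,
    ← (summable_lacunaryTakagi _).tsum_sub (summable_lacunaryTakagi _)]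
  refine (tsum_eq_sum fun k hk => ?_).trans (sum_congr rfl fun k _ => (mul_sub _ _ _).symm)
  obtain ⟨m, hm⟩ := hs k (by simpa using hk)
  rw [mul_add, hm, distNearestInt.add_intCast, sub_self]

lemma abs_inv_two_pow_mul_distNearestInt_sub_le (k : ℕ) (y s : ℝ) :
    |(2 : ℝ)⁻¹ ^ k *
        (distNearestInt (2 ^ (k ^ 2) * (y + s)) - distNearestInt (2 ^ (k ^ 2) * y))|
      ≤ 2 ^ (k ^ 2 - k) * |s| := by
  have hk : (2 : ℝ)⁻¹ ^ k * 2 ^ (k ^ 2) = 2 ^ (k ^ 2 - k) := by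
    rw [pow_sub₀ _ two_ne_zero (Nat.le_self_pow two_ne_zero k), inv_pow, mul_comm]
  calc _ = (2 : ℝ)⁻¹ ^ k *
        |distNearestInt (2 ^ (k ^ 2) * (y + s)) - distNearestInt (2 ^ (k ^ 2) * y)| := by
        rw [abs_mul, abs_of_pos (by positivity)]
    _ ≤ (2 : ℝ)⁻¹ ^ k * (2 ^ (k ^ 2) * |s|) := by
        gcongr
        refine (distNearestInt.abs_sub_le _ _).trans_eq ?_
        rw [← mul_sub, add_sub_cancel_left, abs_mul, abs_of_pos (by positivity)]
    _ = 2 ^ (k ^ 2 - k) * |s| := by rw [← mul_assoc, hk]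

lemma sum_range_two_pow_sq_sub_le (n : ℕ) :
    ∑ k ∈ range (n + 1), 2 ^ (k ^ 2 - k) ≤ 2 ^ (n ^ 2 - n + 1) := by
  induction n with
  | zero => simp
  | succ m ih =>
    rcases Nat.eq_zero_or_pos m with rfl | hm
    · simp [sum_range_succ]
    have hsq : (m + 1) ^ 2 - (m + 1) = m ^ 2 + m := by
      rw [Nat.sub_eq_iff_eq_add (by nlinarith)]; ring
    have hexp : m ^ 2 - m + 1 ≤ m ^ 2 + m := by omega
    rw [sum_range_succ, hsq, pow_succ 2 (m ^ 2 + m)]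
    have := Nat.pow_le_pow_right two_pos hexp
    omega

lemma abs_lacunaryTakagi_add_sub_sub_le {n : ℕ} (hn : 0 < n) (y : ℝ) {s : ℝ}
    (hs : |s| ≤ (2 ^ (n ^ 2))⁻¹) (hint : ∀ k, n < k → ∃ m : ℤ, 2 ^ (k ^ 2) * s = m) :
    |lacunaryTakagi (y + s) - lacunaryTakagi y - (2 : ℝ)⁻¹ ^ n *
        (distNearestInt (2 ^ (n ^ 2) * (y + s)) - distNearestInt (2 ^ (n ^ 2) * y))|
      ≤ 8 * ((2 : ℝ)⁻¹ ^ n) ^ 3 := by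
  rw [lacunaryTakagi_add_sub_eq_sum y hint, sum_range_succ, add_sub_cancel_right]
  obtain ⟨m, rfl⟩ : ∃ m, n = m + 1 := Nat.exists_eq_add_one.2 hn
  have hexp : m ^ 2 - m + 1 + 3 * (m + 1) = (m + 1) ^ 2 + 3 := by
    have := Nat.le_self_pow two_ne_zero m
    zify [this]; ring
  calc _ ≤ ∑ k ∈ range (m + 1), (2 : ℝ) ^ (k ^ 2 - k) * |s| :=
        (abs_sum_le_sum_abs _ _).trans
          (sum_le_sum fun k _ => abs_inv_two_pow_mul_distNearestInt_sub_le k y s)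
    _ ≤ 2 ^ (m ^ 2 - m + 1) * (2 ^ ((m + 1) ^ 2))⁻¹ := by
        rw [← sum_mul]
        gcongr
        exact_mod_cast sum_range_two_pow_sq_sub_le m
    _ = 8 * ((2 : ℝ)⁻¹ ^ (m + 1)) ^ 3 := by
        have h : (2 : ℝ) ^ (m ^ 2 - m + 1) * 2 ^ (3 * (m + 1)) = 2 ^ ((m + 1) ^ 2) * 8 := by
          rw [← pow_add, hexp, pow_add]; norm_num
        rw [← pow_mul, inv_pow, mul_comm (m + 1)]
        field_simp
        exact h

lemma four_pow_eq_two_pow (n : ℕ) : (4 : ℝ) ^ n = 2 ^ (2 * n) := by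
  rw [pow_mul]; norm_num

lemma abs_div_two_pow_le {n : ℕ} {q : ℝ} (hq : |q| ≤ 4 ^ n) :
    |q / 2 ^ (n ^ 2 + 2 * n)| ≤ (2 ^ (n ^ 2))⁻¹ := by
  rw [abs_div, abs_of_pos (by positivity : (0 : ℝ) < 2 ^ (n ^ 2 + 2 * n)),
    div_le_iff₀ (by positivity), pow_add, ← mul_assoc, inv_mul_cancel₀ (by positivity), one_mul,
    ← four_pow_eq_two_pow]
  exact hq

lemma inv_two_pow_sq_le {n : ℕ} (hn : 3 ≤ n) :
    ((2 : ℝ) ^ (n ^ 2))⁻¹ ≤ ((2 : ℝ)⁻¹ ^ n) ^ 3 := by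
  rw [← pow_mul, inv_pow]
  gcongr
  · norm_num
  · nlinarith

lemma abs_lacunaryTakagi_add_div_sub_sub_le {n : ℕ} (hn : 0 < n) (y : ℝ) {q : ℤ}
    (hq : |q| ≤ 4 ^ n) :
    |lacunaryTakagi (y + q / 2 ^ (n ^ 2 + 2 * n)) - lacunaryTakagi y - (2 : ℝ)⁻¹ ^ n *
        (distNearestInt (2 ^ (n ^ 2) * y + q / 4 ^ n) - distNearestInt (2 ^ (n ^ 2) * y))|
      ≤ 8 * ((2 : ℝ)⁻¹ ^ n) ^ 3 := by
  have hscale :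
      (2 : ℝ) ^ (n ^ 2) * (y + q / 2 ^ (n ^ 2 + 2 * n)) = 2 ^ (n ^ 2) * y + q / 4 ^ n := by
    rw [four_pow_eq_two_pow, pow_add]; field_simp
  have hint (k : ℕ) (hk : n < k) :
      ∃ m : ℤ, 2 ^ (k ^ 2) * ((q : ℝ) / 2 ^ (n ^ 2 + 2 * n)) = m := by
    have hle : n ^ 2 + 2 * n ≤ k ^ 2 := by nlinarith
    refine ⟨q * 2 ^ (k ^ 2 - (n ^ 2 + 2 * n)), ?_⟩
    push_cast
    rw [pow_sub₀ _ two_ne_zero hle]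
    ring
  simpa only [hscale] using abs_lacunaryTakagi_add_sub_sub_le hn y
    (abs_div_two_pow_le (by exact_mod_cast hq)) hint

lemma abs_bounds_of_approx {P A B a b c w : ℝ} (hP : 0 < P) (hc : 1 / 4 ≤ |c - w|)
    (ha : |a - w| ≤ P ^ 2) (hb : |b - w| ≤ P ^ 2)
    (hA : |A - P * (a - c)| ≤ 8 * P ^ 3) (hB : |B - P * (b - c)| ≤ 8 * P ^ 3) :
    P / 4 - 9 * P ^ 3 ≤ |A| ∧ |A - B| ≤ 18 * P ^ 3 := by
  constructor
  · have hgap : 1 / 4 - P ^ 2 ≤ |a - c| := by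
      have := abs_sub_le c a w
      rw [abs_sub_comm c a] at this
      linarith
    have hmain : P * (1 / 4 - P ^ 2) ≤ |P * (a - c)| := by
      rw [abs_mul, abs_of_pos hP]; gcongr
    have := abs_sub_abs_le_abs_sub (P * (a - c)) A
    rw [abs_sub_comm (P * (a - c))] at this
    linarith
  · have hab : |P * (a - c) - P * (b - c)| ≤ 2 * P ^ 3 := by
      have := abs_sub_le a w b
      rw [abs_sub_comm w b] at this
      rw [← mul_sub, sub_sub_sub_cancel_right, abs_mul, abs_of_pos hP]
      nlinarith
    calc |A - B| = |(A - P * (a - c)) + -(B - P * (b - c)) + (P * (a - c) - P * (b - c))| := by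
          ring_nf
      _ ≤ _ := abs_add_three _ _ _
      _ ≤ 18 * P ^ 3 := by rw [abs_neg]; linarith

lemma exists_lacunaryTakagi_oscillation (y : ℝ) {n : ℕ} (hn : 3 ≤ n) :
    ∃ x z, y - ((2 : ℝ)⁻¹ ^ n) ^ 3 ≤ x ∧ x < y ∧ y < z ∧ z ≤ y + ((2 : ℝ)⁻¹ ^ n) ^ 3 ∧
      (2 : ℝ)⁻¹ ^ n / 4 - 9 * ((2 : ℝ)⁻¹ ^ n) ^ 3 ≤ |lacunaryTakagi x - lacunaryTakagi y| ∧
      |lacunaryTakagi x - lacunaryTakagi z| ≤ 18 * ((2 : ℝ)⁻¹ ^ n) ^ 3 := by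
  obtain ⟨w, hw₀, hw₁, hfar⟩ := distNearestInt.exists_far (2 ^ (n ^ 2) * y)
  have hN : 0 < 4 ^ n := by positivity
  obtain ⟨j, hj₀, hjN, hj⟩ := distNearestInt.exists_sub_near (2 ^ (n ^ 2) * y) hw₀ hw₁ hN
  obtain ⟨i, hi₀, hiN, hi⟩ := distNearestInt.exists_add_near (2 ^ (n ^ 2) * y) hw₀ hw₁ hN
  have hx := abs_lacunaryTakagi_add_div_sub_sub_le (n := n) (by omega) y (q := -j)
    (by rw [abs_neg, Nat.abs_cast]; exact_mod_cast hjN)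
  have hz := abs_lacunaryTakagi_add_div_sub_sub_le (n := n) (by omega) y (q := i)
    (by rw [Nat.abs_cast]; exact_mod_cast hiN)
  push_cast at hx hz hj hi
  simp only [neg_div, ← sub_eq_add_neg] at hx
  have hNP : 1 / (4 : ℝ) ^ n = ((2 : ℝ)⁻¹ ^ n) ^ 2 := by
    rw [← pow_mul, mul_comm, pow_mul, one_div, ← inv_pow]; norm_num
  rw [hNP] at hj hi
  have hstep {q : ℕ} (hq : q ≤ 4 ^ n) : (q : ℝ) / 2 ^ (n ^ 2 + 2 * n) ≤ ((2 : ℝ)⁻¹ ^ n) ^ 3 :=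
    (le_abs_self _).trans <| (abs_div_two_pow_le (by rw [Nat.abs_cast]; exact_mod_cast hq)).trans
      (inv_two_pow_sq_le hn)
  have hjpos : 0 < (j : ℝ) / 2 ^ (n ^ 2 + 2 * n) := div_pos (Nat.cast_pos.2 hj₀) (by positivity)
  have hipos : 0 < (i : ℝ) / 2 ^ (n ^ 2 + 2 * n) := div_pos (Nat.cast_pos.2 hi₀) (by positivity)
  have hjP := hstep hjN
  have hiP := hstep hiN
  have hP₀ : (0 : ℝ) < 2⁻¹ ^ n := by positivity
  obtain ⟨hlow, hup⟩ := abs_bounds_of_approx hP₀ hfar hj hi hx hz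
  refine ⟨y - j / 2 ^ (n ^ 2 + 2 * n), y + i / 2 ^ (n ^ 2 + 2 * n),
    by linarith, by linarith, by linarith, by linarith, hlow, ?_⟩
  rwa [sub_sub_sub_cancel_right] at hup

theorem not_isMPoint_lacunaryTakagi (y : ℝ) : ¬ IsMPoint lacunaryTakagi y := by
  rintro ⟨c, hc, ε, hε, H⟩
  -- `116 = 4 (9 + 20)`, so that `4 (9 + 20 c) ≤ 116 c` for `c ≥ 1`
  have hδ : 0 < min ε (116 * c)⁻¹ := by positivity
  obtain ⟨n, hn, hPδ⟩ := ((eventually_ge_atTop 3).and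
    ((tendsto_pow_atTop_nhds_zero_of_lt_one (by norm_num) (by norm_num : (2 : ℝ)⁻¹ < 1)).eventually
      (gt_mem_nhds hδ))).exists
  obtain ⟨x, z, hx₁, hx₂, hz₁, hz₂, hlow, hup⟩ := exists_lacunaryTakagi_oscillation y hn
  set P : ℝ := (2 : ℝ)⁻¹ ^ n
  have hP₀ : 0 < P := by positivity
  have hP₁ : P ≤ 1 := pow_le_one₀ (by norm_num) (by norm_num)
  have hPε : P < ε := hPδ.trans_le (min_le_left _ _)
  have hPc : 116 * c * P < 1 := by
    have := hPδ.trans_le (min_le_right _ _)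
    rwa [lt_inv_comm₀ hP₀ (by positivity), ← one_div, lt_div_iff₀ hP₀] at this
  have hP3 : P ^ 3 ≤ P := pow_le_of_le_one hP₀.le hP₁ (by norm_num)
  have hM := H x ⟨by linarith, hx₂⟩ z ⟨hz₁, by linarith⟩
  have hzx : |z - x| ≤ 2 * P ^ 3 := by rw [abs_of_pos (by linarith)]; linarith
  have hcP : P / 4 - 9 * P ^ 3 ≤ 20 * c * P ^ 3 := by
    nlinarith [mul_le_mul_of_nonneg_left (add_le_add hup hzx) (by linarith : (0 : ℝ) ≤ c)]
  nlinarith [mul_le_mul_of_nonneg_left hP₁ (by positivity : (0 : ℝ) ≤ 116 * c * P)]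

theorem isMPoint_of_isBigO_sub {f : ℝ → ℝ} {y : ℝ} (hf : (f · - f y) =O[𝓝 y] (· - y)) :
    IsMPoint f y := by
  obtain ⟨C, hC⟩ := hf.bound
  obtain ⟨ε, hε, hball⟩ := Metric.eventually_nhds_iff.1 hC
  refine ⟨max C 1, le_max_right _ _, ε, hε, fun x hx z hz => ?_⟩
  have hdist : dist x y < ε := by
    rw [Real.dist_eq, abs_sub_lt_iff]
    constructor <;> linarith [hx.1, hx.2]
  have hxy : |f x - f y| ≤ C * |x - y| := by simpa using hball hdist
  have hxz : |x - y| ≤ |z - x| := by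
    rw [abs_of_neg (by linarith [hx.2]), abs_of_pos (by linarith [hx.2, hz.1])]; linarith [hz.1]
  calc |f x - f y| ≤ max C 1 * |x - y| :=
        hxy.trans (mul_le_mul_of_nonneg_right (le_max_left _ _) (abs_nonneg _))
    _ ≤ max C 1 * (|f x - f z| + |z - x|) := by
        gcongr
        linarith [abs_nonneg (f x - f z)]

/-- The function `f(y) = Σ_{k=0}^∞ 2^{−k}‖2^{k²}y‖`, where `‖t‖ = dist(t, ℤ)`, is
continuous, has no `M`-points, and consequently is nowhere differentiable. -/
theorem stmt_12 (f : ℝ → ℝ)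
    (hf : ∀ y : ℝ, f y =
      ∑' k : ℕ, (2 : ℝ)⁻¹ ^ k * |(2 : ℝ) ^ (k ^ 2) * y - round ((2 : ℝ) ^ (k ^ 2) * y)|) :
    Continuous f ∧ (∀ y : ℝ, ¬ IsMPoint f y) ∧
      ∀ y d : ℝ, ¬ HasDerivAt f d y := by
  obtain rfl : f = lacunaryTakagi :=
    funext fun y => by simp only [hf, lacunaryTakagi, distNearestInt, UnitAddCircle.norm_eq]
  exact ⟨continuous_lacunaryTakagi, not_isMPoint_lacunaryTakagi,
    fun y _ hd => not_isMPoint_lacunaryTakagi y (isMPoint_of_isBigO_sub hd.isBigO_sub)⟩
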